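/- arXiv:1806.04700 — 2 statements merged into one kernel-verified Lean document; each statement's English description precedes it below -/
import Mathlib

section
/- Let C > 0 be given and let Q(x) = a_d x^d + … + a_0 be a real polynomial with leading coefficient a_d > 0 and degree d ≥ 2. Then, as r → ∞, ∫_C^r exp(Q(y)) dy = (1/Q'(r)) exp(Q(r)) + O( (1/Q'(r))^2 exp(Q(r)) ). -/
/-!
Integrating by parts once, `∫ e^Q = e^Q / Q' + ∫ e^Q Q'' / Q'^2`, so the error term has derivative
`e^Q Q'' / Q'^2`. Since `deg Q'' < deg Q'` and `Q' → ∞`, this derivative is eventually bounded by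
twice the derivative `e^Q (Q'^2 - 2 Q'') / Q'^3` of `e^Q / Q'^2`, and `e^Q / Q'^2 ≥ 1` eventually
absorbs the constants of integration.
-/

open Filter Topology Asymptotics MeasureTheory Polynomial

theorem Asymptotics.isBigO_atTop_of_norm_deriv_le_deriv {E : Type*} [NormedAddCommGroup E]
    [NormedSpace ℝ E] {f f' : ℝ → E} {g g' : ℝ → ℝ}
    (hf : ∀ᶠ x in atTop, HasDerivAt f (f' x) x) (hg : ∀ᶠ x in atTop, HasDerivAt g (g' x) x)
    (hbound : ∀ᶠ x in atTop, ‖f' x‖ ≤ g' x) (hg_one : ∀ᶠ x in atTop, 1 ≤ g x) :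
    f =O[atTop] g := by
  obtain ⟨R, hR⟩ := eventually_atTop.mp (hf.and (hg.and (hbound.and hg_one)))
  refine IsBigO.of_bound (‖f R‖ + 1) ((eventually_ge_atTop R).mono fun x hx => ?_)
  have hfg : ‖f x‖ ≤ ‖f R‖ + g x :=
    image_norm_le_of_norm_deriv_right_le_deriv_boundary' (B := fun y => ‖f R‖ + g y)
      (fun y hy => (hR y hy.1).1.continuousAt.continuousWithinAt)
      (fun y hy => (hR y hy.1).1.hasDerivWithinAt)
      (by linarith [(hR R le_rfl).2.2.2])
      (fun y hy => ((hR y hy.1).2.1.continuousAt.const_add _).continuousWithinAt)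
      (fun y hy => ((hR y hy.1).2.1.const_add _).hasDerivWithinAt)
      (fun y hy => (hR y hy.1).2.2.1) ⟨hx, le_rfl⟩
  have hgx : 1 ≤ g x := (hR x hx).2.2.2
  rw [Real.norm_of_nonneg (by linarith)]
  nlinarith [norm_nonneg (f R)]

namespace Polynomial

variable {Q : ℝ[X]}

theorem tendsto_eval_derivative_atTop (hdeg : 2 ≤ Q.natDegree) (hlead : 0 < Q.leadingCoeff) :
    Tendsto (fun x => Q.derivative.eval x) atTop atTop := by
  refine tendsto_atTop_of_leadingCoeff_nonneg _ ?_ ?_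
  · rw [← natDegree_pos_iff_degree_pos, natDegree_derivative]
    omega
  · rw [leadingCoeff_derivative]
    positivity

theorem eventually_eval_derivative_sq_le_exp (hdeg : 0 < Q.degree) (hlead : 0 ≤ Q.leadingCoeff) :
    ∀ᶠ x in atTop, Q.derivative.eval x ^ 2 ≤ Real.exp (Q.eval x) := by
  have hQ : Q ≠ 0 := ne_zero_of_degree_gt hdeg
  filter_upwards [(tendsto_atTop_of_leadingCoeff_nonneg Q hdeg hlead).eventually_ge_atTop 0,
    (isLittleO_atTop_of_degree_lt _ _ (degree_derivative_lt hQ)).def (c := 1 / 2) (by norm_num)]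
    with x hx hx'
  rw [Real.norm_eq_abs, Real.norm_of_nonneg hx] at hx'
  calc Q.derivative.eval x ^ 2 = |Q.derivative.eval x| ^ 2 := (sq_abs _).symm
    _ ≤ (1 / 2 * Q.eval x) ^ 2 := by gcongr
    _ ≤ Q.eval x ^ 2 / (2 : ℕ).factorial := by norm_num; nlinarith
    _ ≤ Real.exp (Q.eval x) := Real.pow_div_factorial_le_exp _ hx 2

theorem hasDerivAt_exp_eval_div_eval_derivative_pow (Q : ℝ[X]) (n : ℕ) {x : ℝ}
    (hx : Q.derivative.eval x ≠ 0) :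
    HasDerivAt (fun y => Real.exp (Q.eval y) / Q.derivative.eval y ^ n)
      (Real.exp (Q.eval x) * (Q.derivative.eval x ^ 2 - n * Q.derivative.derivative.eval x) /
        Q.derivative.eval x ^ (n + 1)) x := by
  refine ((Q.hasDerivAt x).exp.div ((Q.derivative.hasDerivAt x).fun_pow n)
    (pow_ne_zero n hx)).congr_deriv ?_
  rcases n with _ | n
  · field_simp
    ring
  · field_simp
    push_cast
    ring

end Polynomial

theorem abs_mul_div_sq_le {E p q : ℝ} (hE : 0 ≤ E) (hp : 4 ≤ p) (hq : |q| ≤ p) :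
    |E * q / p ^ 2| ≤ 2 * (E * (p ^ 2 - 2 * q) / p ^ 3) := by
  have hp0 : 0 < p := by linarith
  rw [show E * q / p ^ 2 = E * q * p / p ^ 3 by field_simp, mul_div_assoc', abs_div, abs_mul,
    abs_mul, abs_of_nonneg hE, abs_of_pos (pow_pos hp0 3), abs_of_pos hp0]
  gcongr ?_ / _
  nlinarith [mul_le_mul_of_nonneg_right (mul_le_mul_of_nonneg_left hq hE) hp0.le,
    mul_le_mul_of_nonneg_left ((le_abs_self q).trans hq) hE,
    mul_nonneg (mul_nonneg hE hp0.le) (sub_nonneg.2 hp)]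

theorem stmt4_general (C : ℝ) (Q : Polynomial ℝ)
    (hdeg : 2 ≤ Q.natDegree) (hlead : 0 < Q.leadingCoeff) :
    (fun r : ℝ => (∫ y in C..r, Real.exp (Q.eval y)) -
        Real.exp (Q.eval r) / Q.derivative.eval r)
      =O[atTop] fun r : ℝ => Real.exp (Q.eval r) / (Q.derivative.eval r) ^ 2 := by
  have hQ'_ge : ∀ᶠ x in atTop, 4 ≤ Q.derivative.eval x :=
    (tendsto_eval_derivative_atTop hdeg hlead).eventually_ge_atTop 4
  have hQ'' : ∀ᶠ x in atTop, ‖Q.derivative.derivative.eval x‖ ≤ 1 * ‖Q.derivative.eval x‖ :=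
    (isLittleO_atTop_of_degree_lt _ _
      (degree_derivative_lt (derivative_ne_zero.2 (by omega)))).def one_pos
  refine IsBigO.of_const_mul_right (c := 2) (isBigO_atTop_of_norm_deriv_le_deriv
    (f' := fun x => Real.exp (Q.eval x) * Q.derivative.derivative.eval x / Q.derivative.eval x ^ 2)
    (g' := fun x => 2 * (Real.exp (Q.eval x) *
      (Q.derivative.eval x ^ 2 - 2 * Q.derivative.derivative.eval x) / Q.derivative.eval x ^ 3))
    ?_ ?_ ?_ ?_)
  · filter_upwards [hQ'_ge] with x hx
    convert (Q.continuous.rexp.integral_hasStrictDerivAt C x).hasDerivAt.sub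
      (hasDerivAt_exp_eval_div_eval_derivative_pow Q 1 (by positivity)) using 1
    · ext r
      simp
    · field_simp
      ring
  · filter_upwards [hQ'_ge] with x hx
    refine ((hasDerivAt_exp_eval_div_eval_derivative_pow Q 2 (by positivity)).const_mul
      2).congr_deriv ?_
    norm_num
  · filter_upwards [hQ'_ge, hQ''] with x hx hx'
    rw [one_mul, Real.norm_eq_abs, Real.norm_of_nonneg (by linarith)] at hx'
    exact abs_mul_div_sq_le (Real.exp_pos _).le hx hx'
  · filter_upwards [eventually_eval_derivative_sq_le_exp
      (natDegree_pos_iff_degree_pos.mp (by omega)) hlead.le, hQ'_ge] with x hx hx'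
    rw [mul_div_assoc', le_div_iff₀ (by positivity)]
    linarith [Real.exp_pos (Q.eval x)]

/-- For `C > 0` and a real polynomial `Q` of degree `d ≥ 2` with positive
leading coefficient, `∫_C^r e^{Q(y)} dy = e^{Q(r)}/Q'(r) + O(e^{Q(r)}/Q'(r)^2)` as `r → ∞`. -/
theorem stmt4 (C : ℝ) (hC : 0 < C) (Q : Polynomial ℝ)
    (hdeg : 2 ≤ Q.natDegree) (hlead : 0 < Q.leadingCoeff) :
    (fun r : ℝ => (∫ y in C..r, Real.exp (Q.eval y)) -
        Real.exp (Q.eval r) / Q.derivative.eval r)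
      =O[atTop] fun r : ℝ => Real.exp (Q.eval r) / (Q.derivative.eval r) ^ 2 :=
  stmt4_general C Q hdeg hlead
end

section
/- Let Θ = (θ_m)_{m≥1} with θ_m ≥ 0, and endow S_n with the measure P_Θ. Let L_1(σ) denote the length of the cycle of σ containing the element 1. Then for every 1 ≤ m ≤ n, P_Θ[L_1 = m] = (θ_m / n) · (h_{n-m} / h_n), where h_j are the normalization constants of P_Θ. -/
/-!
A permutation whose cycle through the point `a` has length `k + 1` is the same thing as a list `a, x₁, …, x_k` of distinct points (the cycle) together with an arbitrary
permutation `τ` of the `n - k - 1` remaining points. Its cycle lengths, fixed points included, are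
`k + 1` together with those of `τ`, so its weight is `θ_{k+1}` times that of `τ`. There are
`(n - 1)! / (n - k - 1)!` such lists, hence `∑_{L₁ = k+1} w = (n - 1)! / (n - k - 1)! · θ_{k+1} ·
h_{n-k-1} (n - k - 1)!`, and dividing by `h_n n!` gives the formula.
-/

open Filter Topology Asymptotics

/-- `C_m(σ)`: the number of cycles of length `m` in the cycle decomposition of `σ`
(fixed points count as cycles of length `1`). -/
noncomputable def cycleCount {n : ℕ} (m : ℕ) (σ : Equiv.Perm (Fin n)) : ℕ :=
  if m = 1 then n - σ.support.card else σ.cycleType.count m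

/-- The weight `∏_{m=1}^n θ_m^{C_m(σ)}`. -/
noncomputable def thetaWeight (θ : ℕ → ℝ) {n : ℕ} (σ : Equiv.Perm (Fin n)) : ℝ :=
  ∏ m ∈ Finset.Icc 1 n, θ m ^ cycleCount m σ

/-- The normalization constant `h_n` of the measure `P_Θ`. -/
noncomputable def hTheta (θ : ℕ → ℝ) (n : ℕ) : ℝ :=
  (∑ σ : Equiv.Perm (Fin n), thetaWeight θ σ) / n.factorial

/-- The probability of `σ` under the measure `P_Θ`. -/
noncomputable def probTheta (θ : ℕ → ℝ) {n : ℕ} (σ : Equiv.Perm (Fin n)) : ℝ :=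
  thetaWeight θ σ / (hTheta θ n * n.factorial)

open scoped Classical in
/-- The probability of a set of permutations under the measure `P_Θ`. -/
noncomputable def probOfTheta (θ : ℕ → ℝ) {n : ℕ} (s : Set (Equiv.Perm (Fin n))) : ℝ :=
  ∑ σ : Equiv.Perm (Fin n), if σ ∈ s then probTheta θ σ else 0

open scoped Classical in
/-- `L_1(σ)`: the length of the cycle of `σ` containing the first element. -/
noncomputable def lenCycleOfOne {n : ℕ} (σ : Equiv.Perm (Fin n)) : ℕ :=
  if h : 0 < n then (Finset.univ.filter fun y => σ.SameCycle ⟨0, h⟩ y).card else 0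
open Equiv Equiv.Perm Function Finset
open scoped Nat

section Weight

variable {α β : Type*} [Fintype α] [DecidableEq α] [Fintype β] [DecidableEq β]

noncomputable def permWeight (θ : ℕ → ℝ) (σ : Perm α) : ℝ :=
  (σ.partition.parts.map θ).prod

lemma cycleCount_eq_count_parts {n : ℕ} (m : ℕ) (σ : Perm (Fin n)) :
    cycleCount m σ = σ.partition.parts.count m := by
  rw [cycleCount, parts_partition, Multiset.count_add, Multiset.count_replicate, Fintype.card_fin]
  rcases eq_or_ne m 1 with rfl | hm
  · rw [if_pos rfl, if_pos rfl,
      Multiset.count_eq_zero.mpr fun h => (one_lt_of_mem_cycleType h).ne rfl, zero_add]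
  · rw [if_neg hm, if_neg hm.symm, add_zero]

lemma thetaWeight_eq_permWeight (θ : ℕ → ℝ) {n : ℕ} (σ : Perm (Fin n)) :
    thetaWeight θ σ = permWeight θ σ := by
  rw [permWeight, prod_multiset_map_count, thetaWeight]
  simp only [cycleCount_eq_count_parts]
  refine (prod_subset (fun m hm => ?_) fun m _ hm => ?_).symm
  · have hm := Multiset.mem_toFinset.mp hm
    have hle : m ≤ n := by
      simpa [σ.partition.parts_sum] using Multiset.le_sum_of_mem hm
    exact mem_Icc.mpr ⟨σ.partition.parts_pos hm, hle⟩
  · rw [Multiset.count_eq_zero_of_notMem (by simpa using hm), pow_zero]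

lemma permWeight_permCongr (θ : ℕ → ℝ) (e : α ≃ β) (σ : Perm α) :
    permWeight θ (e.permCongr σ) = permWeight θ σ := by
  have hext : e.permCongr σ =
      σ.extendDomain (e.trans (Equiv.subtypeUnivEquiv fun _ => trivial).symm) := by
    ext x
    simp [extendDomain_apply_subtype, permCongr_apply]
  rw [permWeight, permWeight, parts_partition, parts_partition, hext, cycleType_extendDomain,
    card_support_extend_domain, Fintype.card_congr e]

lemma sum_permWeight_congr (θ : ℕ → ℝ) (e : α ≃ β) :
    ∑ σ : Perm α, permWeight θ σ = ∑ σ : Perm β, permWeight θ σ :=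
  Fintype.sum_equiv e.permCongr _ _ fun σ => (permWeight_permCongr θ e σ).symm

end Weight

section Orbit

variable {α : Type*}

lemma sameCycle_iff_exists_lt_minimalPeriod [Finite α] (σ : Perm α) (a x : α) :
    σ.SameCycle a x ↔ ∃ i < minimalPeriod σ a, σ^[i] a = x := by
  constructor
  · intro h
    obtain ⟨i, -, rfl⟩ := h.exists_pow_eq'
    refine ⟨i % minimalPeriod σ a, Nat.mod_lt _ ?_, by rw [iterate_mod_minimalPeriod_eq, coe_pow]⟩
    exact minimalPeriod_pos_of_mem_periodicPts (σ.injective.mem_periodicPts a)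
  · rintro ⟨i, -, rfl⟩
    exact ⟨i, by rw [zpow_natCast, coe_pow]⟩

variable [DecidableEq α]

lemma card_filter_sameCycle [Fintype α] (σ : Perm α) (a : α) :
    #{x | σ.SameCycle a x} = minimalPeriod σ a := by
  have : ({x | σ.SameCycle a x} : Finset α) = (range (minimalPeriod σ a)).image (σ^[·] a) := by
    ext x
    simp [sameCycle_iff_exists_lt_minimalPeriod]
  rw [this, card_image_of_injOn, card_range]
  exact fun i hi j hj => iterate_injOn_Iio_minimalPeriod (by simpa using hi) (by simpa using hj)

lemma lenCycleOfOne_eq_minimalPeriod {n : ℕ} (hn : 0 < n) (σ : Perm (Fin n)) :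
    lenCycleOfOne σ = minimalPeriod σ ⟨0, hn⟩ := by
  rw [lenCycleOfOne, dif_pos hn, ← card_filter_sameCycle]

lemma formPerm_ofFn_iterate_apply {σ : Perm α} {a : α} {n : ℕ} (hσ : minimalPeriod σ a = n)
    {x : α} (hx : x ∈ List.ofFn fun i : Fin n => σ^[i] a) :
    (List.ofFn fun i : Fin n => σ^[i] a).formPerm x = σ x := by
  have hnodup : (List.ofFn fun i : Fin n => σ^[i] a).Nodup :=
    List.nodup_ofFn.mpr fun i j hij => Fin.ext
      (iterate_injOn_Iio_minimalPeriod (by simp [hσ]) (by simp [hσ]) hij)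
  obtain ⟨i, rfl⟩ := List.mem_ofFn.mp hx
  have := List.formPerm_apply_getElem _ hnodup i (by simp)
  simp only [List.getElem_ofFn, List.length_ofFn] at this
  subst hσ
  rw [this, iterate_mod_minimalPeriod_eq, iterate_succ_apply']

end Orbit

lemma disjoint_formPerm_ofSubtype {α : Type*} [DecidableEq α] (l : List α)
    (τ : Perm {x // x ∉ l}) : Disjoint l.formPerm (ofSubtype τ) := by
  intro x
  by_cases hx : x ∈ l
  · exact Or.inr (ofSubtype_apply_of_not_mem τ (not_not.mpr hx))
  · exact Or.inl (List.formPerm_apply_of_notMem hx)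

section InsertCycle

variable {α : Type*} (a : α) {k : ℕ}

def cycleList (g : Fin k ↪ {x // x ≠ a}) : List α :=
  a :: List.ofFn fun j => (g j : α)

lemma length_cycleList (g : Fin k ↪ {x // x ≠ a}) : (cycleList a g).length = k + 1 := by
  simp [cycleList]

lemma nodup_cycleList (g : Fin k ↪ {x // x ≠ a}) : (cycleList a g).Nodup := by
  refine List.nodup_cons.mpr
    ⟨fun h => ?_, List.nodup_ofFn.mpr (Subtype.val_injective.comp g.injective)⟩
  obtain ⟨j, hj⟩ := List.mem_ofFn.mp h
  exact (g j).2 hj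

variable [DecidableEq α]

noncomputable def insertCycle (g : Fin k ↪ {x // x ≠ a}) (τ : Perm {x // x ∉ cycleList a g}) :
    Perm α :=
  (cycleList a g).formPerm * ofSubtype τ

variable {a}

section
variable (g : Fin k ↪ {x // x ≠ a}) (τ : Perm {x // x ∉ cycleList a g})

lemma insertCycle_apply_of_mem {x : α} (hx : x ∈ cycleList a g) :
    insertCycle a g τ x = (cycleList a g).formPerm x := by
  rw [insertCycle, Perm.mul_apply, ofSubtype_apply_of_not_mem τ (not_not.mpr hx)]

lemma iterate_insertCycle (i : ℕ) :
    (insertCycle a g τ)^[i] a =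
      (cycleList a g)[i % (k + 1)]'(by simpa [length_cycleList] using Nat.mod_lt _ k.succ_pos) := by
  induction i with
  | zero => rfl
  | succ i ih =>
    rw [iterate_succ_apply', ih, insertCycle_apply_of_mem _ _ (List.getElem_mem _),
      List.formPerm_apply_getElem _ (nodup_cycleList a g)]
    simp only [length_cycleList, Nat.mod_add_mod]

lemma minimalPeriod_insertCycle : minimalPeriod (insertCycle a g τ) a = k + 1 := by
  have hper : IsPeriodicPt (insertCycle a g τ) (k + 1) a := by
    simp [IsPeriodicPt, IsFixedPt, iterate_insertCycle, cycleList]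
  have hmod : minimalPeriod (insertCycle a g τ) a % (k + 1) = 0 := by
    have h := iterate_minimalPeriod (f := insertCycle a g τ) (x := a)
    rw [iterate_insertCycle] at h
    exact ((nodup_cycleList a g).getElem_inj_iff (j := 0) (hj := by simp [length_cycleList])).mp h
  have := Nat.le_of_dvd (hper.minimalPeriod_pos k.succ_pos) (Nat.dvd_of_mod_eq_zero hmod)
  have := hper.minimalPeriod_le k.succ_pos
  omega

variable [Fintype α]

lemma card_notMem_cycleList :
    Fintype.card {x // x ∉ cycleList a g} = Fintype.card α - (k + 1) := by
  have hcard : Fintype.card {x // x ∈ cycleList a g} = k + 1 := by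
    rw [← length_cycleList a g, ← List.toFinset_card_of_nodup (nodup_cycleList a g),
      ← Fintype.card_coe]
    simp
  rw [Fintype.card_subtype_compl, hcard]

lemma parts_partition_insertCycle :
    (insertCycle a g τ).partition.parts = (k + 1) ::ₘ τ.partition.parts := by
  have hτ : #τ.support ≤ Fintype.card α - (k + 1) :=
    card_notMem_cycleList g ▸ τ.support.card_le_univ
  have hdisj := disjoint_formPerm_ofSubtype _ τ
  rw [parts_partition, parts_partition, insertCycle, hdisj.cycleType_mul, hdisj.card_support_mul,
    cycleType_ofSubtype, support_ofSubtype, card_map, card_notMem_cycleList]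
  rcases k with _ | k
  · have hone : (cycleList a g).formPerm = 1 := by simp [cycleList]
    have : Fintype.card α - #τ.support = Fintype.card α - (0 + 1) - #τ.support + 1 := by
      have := Fintype.card_pos_iff.mpr ⟨a⟩
      omega
    rw [hone, cycleType_one, Perm.support_one, card_empty, zero_add, zero_add, this,
      Multiset.replicate_succ, Multiset.add_cons]
  · have hcyc := List.isCycle_formPerm (nodup_cycleList a g) (by simp [length_cycleList])
    have hsupp : #(cycleList a g).formPerm.support = k + 1 + 1 := by
      rw [List.support_formPerm_of_nodup _ (nodup_cycleList a g) (by simp [cycleList]),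
        List.toFinset_card_of_nodup (nodup_cycleList a g), length_cycleList]
    rw [hcyc.cycleType, hsupp, Multiset.singleton_add, Multiset.cons_add, Nat.sub_sub]

lemma permWeight_insertCycle (θ : ℕ → ℝ) :
    permWeight θ (insertCycle a g τ) = θ (k + 1) * permWeight θ τ := by
  rw [permWeight, permWeight, parts_partition_insertCycle, Multiset.map_cons, Multiset.prod_cons]

end

lemma insertCycle_injective :
    Injective fun p : (Σ g : Fin k ↪ {x // x ≠ a}, Perm {x // x ∉ cycleList a g}) =>
      insertCycle a p.1 p.2 := by
  rintro ⟨g₁, τ₁⟩ ⟨g₂, τ₂⟩ h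
  dsimp only at h
  have hlist : cycleList a g₁ = cycleList a g₂ := by
    refine List.ext_getElem (by simp [length_cycleList]) fun i h₁ h₂ => ?_
    have := iterate_insertCycle g₁ τ₁ i
    rw [h, iterate_insertCycle] at this
    simpa [Nat.mod_eq_of_lt (length_cycleList a g₁ ▸ h₁)] using this.symm
  obtain rfl : g₁ = g₂ := by
    ext j
    exact congrFun (List.ofFn_injective (List.cons_injective hlist)) j
  obtain rfl : τ₁ = τ₂ := ofSubtype_injective (mul_left_cancel h)
  rfl

variable [Fintype α]

lemma exists_insertCycle_eq {σ : Perm α} (hσ : minimalPeriod σ a = k + 1) :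
    ∃ (g : Fin k ↪ {x // x ≠ a}) (τ : Perm {x // x ∉ cycleList a g}), insertCycle a g τ = σ := by
  have hinj : ∀ i < k + 1, ∀ j < k + 1, σ^[i] a = σ^[j] a → i = j := fun i hi j hj =>
    (iterate_eq_iterate_iff_of_lt_minimalPeriod (hσ ▸ hi) (hσ ▸ hj)).mp
  let g : Fin k ↪ {x // x ≠ a} :=
    ⟨fun j => ⟨σ^[j + 1] a, fun h => by have := hinj _ (by omega) 0 (by omega) h; omega⟩,
      fun i j hij => Fin.ext <| by
        have := hinj _ (by omega) _ (by omega) (congrArg Subtype.val hij)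
        omega⟩
  have hlist : cycleList a g = List.ofFn fun i : Fin (k + 1) => σ^[i] a := by
    simp [cycleList, List.ofFn_succ, g]
  have hmem : ∀ x, x ∈ cycleList a g ↔ σ.SameCycle a x := by
    intro x
    rw [hlist, List.mem_ofFn, sameCycle_iff_exists_lt_minimalPeriod, hσ, Fin.exists_iff]
    simp only [exists_prop]
  refine ⟨g, σ.subtypePerm fun x => not_congr (by rw [hmem, hmem, sameCycle_apply_right]), ?_⟩
  ext x
  by_cases hx : x ∈ cycleList a g
  · rw [insertCycle_apply_of_mem g _ hx, hlist, formPerm_ofFn_iterate_apply hσ (hlist ▸ hx)]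
  · rw [insertCycle, Perm.mul_apply, ofSubtype_apply_of_mem (p := (· ∉ cycleList a g)) _ hx,
      subtypePerm_apply,
      List.formPerm_apply_of_notMem (by rwa [hmem, sameCycle_apply_right, ← hmem])]

variable (a k)

noncomputable def insertCycleEquiv :
    (Σ g : Fin k ↪ {x // x ≠ a}, Perm {x // x ∉ cycleList a g}) ≃
      {σ : Perm α // minimalPeriod σ a = k + 1} :=
  Equiv.ofBijective (fun p => ⟨insertCycle a p.1 p.2, minimalPeriod_insertCycle p.1 p.2⟩)
    ⟨fun _ _ h => insertCycle_injective (congrArg Subtype.val h), fun σ => by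
      obtain ⟨g, τ, h⟩ := exists_insertCycle_eq σ.2
      exact ⟨⟨g, τ⟩, Subtype.ext h⟩⟩

lemma coe_insertCycleEquiv_apply
    (p : Σ g : Fin k ↪ {x // x ≠ a}, Perm {x // x ∉ cycleList a g}) :
    (insertCycleEquiv a k p : Perm α) = insertCycle a p.1 p.2 :=
  rfl

theorem sum_permWeight_minimalPeriod_eq (θ : ℕ → ℝ) :
    ∑ σ : {σ : Perm α // minimalPeriod σ a = k + 1}, permWeight θ (σ : Perm α) =
      (Fintype.card α - 1).descFactorial k * θ (k + 1) *
        ∑ τ : Perm (Fin (Fintype.card α - (k + 1))), permWeight θ τ := by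
  have hcard : Fintype.card (Fin k ↪ {x // x ≠ a}) = (Fintype.card α - 1).descFactorial k := by
    simp [Fintype.card_embedding_eq, Fintype.card_subtype_compl]
  rw [← (insertCycleEquiv a k).sum_comp, Fintype.sum_sigma]
  simp only [coe_insertCycleEquiv_apply, permWeight_insertCycle, ← mul_sum,
    fun g => sum_permWeight_congr θ (Fintype.equivFinOfCardEq (card_notMem_cycleList g))]
  rw [sum_const, card_univ, hcard, nsmul_eq_mul]
  ring

end InsertCycle

lemma sum_thetaWeight (θ : ℕ → ℝ) (n : ℕ) :
    ∑ σ : Perm (Fin n), thetaWeight θ σ = hTheta θ n * n ! := by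
  rw [hTheta, div_mul_cancel₀ _ (by positivity)]

lemma probOfTheta_setOf {n : ℕ} (θ : ℕ → ℝ) (p : Perm (Fin n) → Prop) [DecidablePred p] :
    probOfTheta θ {σ | p σ} = (∑ σ with p σ, thetaWeight θ σ) / (hTheta θ n * n !) := by
  rw [probOfTheta, sum_filter, sum_div]
  refine sum_congr rfl fun σ _ => ?_
  by_cases hσ : p σ <;> simp [hσ, probTheta]

lemma sum_thetaWeight_lenCycleOfOne (θ : ℕ → ℝ) {n : ℕ} (hn : 0 < n) (k : ℕ) :
    ∑ σ : Perm (Fin n) with lenCycleOfOne σ = k + 1, thetaWeight θ σ =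
      (n - 1).descFactorial k * θ (k + 1) * (hTheta θ (n - (k + 1)) * (n - (k + 1))!) := by
  rw [sum_subtype _ (p := fun σ : Perm (Fin n) => minimalPeriod σ ⟨0, hn⟩ = k + 1)
    (by simp [lenCycleOfOne_eq_minimalPeriod hn]), ← sum_thetaWeight]
  simp only [thetaWeight_eq_permWeight]
  rw [sum_permWeight_minimalPeriod_eq, Fintype.card_fin]

theorem stmt13_general (θ : ℕ → ℝ) (n m : ℕ) (hm : 1 ≤ m) (hmn : m ≤ n) :
    probOfTheta θ {σ : Equiv.Perm (Fin n) | lenCycleOfOne σ = m} =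
      θ m / n * (hTheta θ (n - m) / hTheta θ n) := by
  obtain ⟨k, rfl⟩ := Nat.exists_eq_add_of_le' hm
  have hn : 0 < n := by omega
  have hfact : (n - 1).descFactorial k * (n - (k + 1))! * n = n ! := by
    rw [mul_comm ((n - 1).descFactorial k), show n - (k + 1) = n - 1 - k by omega,
      Nat.factorial_mul_descFactorial (by omega), mul_comm, Nat.mul_factorial_pred hn.ne']
  have hpos : ((n - 1).descFactorial k * (n - (k + 1))! : ℝ) ≠ 0 := by
    have : 0 < (n - 1).descFactorial k := Nat.descFactorial_pos.mpr (by omega)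
    positivity
  rw [probOfTheta_setOf, sum_thetaWeight_lenCycleOfOne θ hn, ← hfact]
  push_cast
  calc _ = θ (k + 1) * hTheta θ (n - (k + 1)) * ((n - 1).descFactorial k * (n - (k + 1))! : ℝ) /
        (n * hTheta θ n * ((n - 1).descFactorial k * (n - (k + 1))! : ℝ)) := by ring
    _ = _ := by rw [mul_div_mul_right _ _ hpos, div_mul_div_comm]

/-- `P_Θ[L_1 = m] = (θ_m/n) · h_{n-m}/h_n` for `1 ≤ m ≤ n`. -/
theorem stmt13 (θ : ℕ → ℝ) (hθ : ∀ m, 0 ≤ θ m) (n m : ℕ) (hm : 1 ≤ m) (hmn : m ≤ n) :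
    probOfTheta θ {σ : Equiv.Perm (Fin n) | lenCycleOfOne σ = m} =
      θ m / n * (hTheta θ (n - m) / hTheta θ n) :=
  stmt13_general θ n m hm hmn
end
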